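/- arXiv:1603.04561 — 5 statements merged into one kernel-verified Lean document; each statement's English description precedes it below -/
import Mathlib

section
/- For real numbers q and x with |q| < 1, the series sum over r ≥ 1 of q^r cos(r x)/r converges to -(1/2) log(1 - 2 q cos x + q^2). -/
/-!
With `z = q e^{ix}` the series is the real part of `∑ z^(r+1)/(r+1) = -log (1 - z)`, and
`Re log (1 - z) = ½ log |1 - z|²` with `|1 - z|² = 1 - 2 q cos x + q²`.
-/

open Complex

namespace Complex

theorem ofReal_mul_exp_mul_I_pow (r θ : ℝ) (n : ℕ) :
    (r * exp (θ * I)) ^ n = ↑(r ^ n) * exp (↑(n * θ) * I) := by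
  rw [mul_pow, ← exp_nat_mul]
  push_cast
  ring_nf

theorem re_ofReal_mul_exp_mul_I_pow (r θ : ℝ) (n : ℕ) :
    ((r * exp (θ * I)) ^ n).re = r ^ n * Real.cos (n * θ) := by
  rw [ofReal_mul_exp_mul_I_pow, re_ofReal_mul, exp_ofReal_mul_I_re]

theorem normSq_one_sub_ofReal_mul_exp_mul_I (r θ : ℝ) :
    normSq (1 - r * exp (θ * I)) = 1 - 2 * r * Real.cos θ + r ^ 2 := by
  simp only [normSq_apply, sub_re, sub_im, one_re, one_im, re_ofReal_mul, im_ofReal_mul,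
    exp_ofReal_mul_I_re, exp_ofReal_mul_I_im]
  linear_combination r ^ 2 * Real.sin_sq_add_cos_sq θ

theorem log_re_eq_half_mul_log_normSq (z : ℂ) : (log z).re = 1 / 2 * Real.log (normSq z) := by
  rw [log_re, norm_def, Real.log_sqrt (normSq_nonneg z)]
  ring

end Complex

theorem cos_series_log (q x : ℝ) (hq : |q| < 1) :
    HasSum (fun r : ℕ => q ^ (r + 1) * Real.cos ((r + 1) * x) / (r + 1))
      (-(1 / 2) * Real.log (1 - 2 * q * Real.cos x + q ^ 2)) := by
  have hz : ‖(q : ℂ) * exp (x * I)‖ < 1 := by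
    rwa [norm_mul, norm_exp_ofReal_mul_I, mul_one, norm_real, Real.norm_eq_abs]
  have h := hasSum_re (hasSum_taylorSeries_neg_log' hz)
  rw [neg_re, log_re_eq_half_mul_log_normSq, normSq_one_sub_ofReal_mul_exp_mul_I, ← neg_mul] at h
  convert h using 2 with n
  rw [← ofReal_natCast, ← ofReal_one, ← ofReal_add, div_ofReal_re, re_ofReal_mul_exp_mul_I_pow]
  push_cast
  rfl
end

section
/- For real numbers q and x with |q| < 1, the series sum over r ≥ 1 of q^r sin(r x)/r converges to arctan(q sin x / (1 - q cos x)). -/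
/-!
With `z = q e^{ix}` in the unit disc, `∑ z^r / r = -log (1 - z)`. Taking imaginary parts, the
left side becomes `∑ q^r sin (r x) / r`, and the right side is `-arg (1 - z)`; since
`Re (1 - z) > 0`, that argument is the arctangent of `Im (1 - z) / Re (1 - z)`.
-/

namespace Complex

theorem arg_eq_arctan_of_re_pos {w : ℂ} (hw : 0 < w.re) :
    arg w = Real.arctan (w.im / w.re) := by
  rw [← tan_arg]
  exact (Real.arctan_tan (neg_pi_div_two_lt_arg_iff.mpr (Or.inl hw))
    (arg_lt_pi_div_two_iff.mpr (Or.inl hw))).symm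

theorem hasSum_im_pow_succ_div_succ {z : ℂ} (hz : ‖z‖ < 1) :
    HasSum (fun n : ℕ => (z ^ (n + 1)).im / (n + 1))
      (Real.arctan (z.im / (1 - z.re))) := by
  have hre : 0 < (1 - z).re := by
    rw [sub_re, one_re, sub_pos]
    exact (re_le_norm z).trans_lt hz
  have him : (-log (1 - z)).im = Real.arctan (z.im / (1 - z.re)) := by
    rw [neg_im, log_im, arg_eq_arctan_of_re_pos hre, sub_im, sub_re, one_im, one_re, zero_sub,
      neg_div, Real.arctan_neg, neg_neg]
  rw [← him]
  convert hasSum_im (hasSum_taylorSeries_neg_log' hz) using 2 with n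
  norm_cast
  rw [div_natCast_im]

theorem im_ofReal_mul_exp_mul_I_pow (q x : ℝ) (n : ℕ) :
    ((q * exp (x * I)) ^ n).im = q ^ n * Real.sin (n * x) := by
  rw [mul_pow, ← exp_nat_mul, ← mul_assoc, ← ofReal_pow, ← ofReal_natCast, ← ofReal_mul,
    im_ofReal_mul, exp_ofReal_mul_I_im]

end Complex

open Complex in
theorem sin_series_arctan (q x : ℝ) (hq : |q| < 1) :
    HasSum (fun r : ℕ => q ^ (r + 1) * Real.sin ((r + 1) * x) / (r + 1))
      (Real.arctan (q * Real.sin x / (1 - q * Real.cos x))) := by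
  have hz : ‖(q : ℂ) * exp (x * I)‖ < 1 := by
    simpa [norm_exp_ofReal_mul_I] using hq
  convert hasSum_im_pow_succ_div_succ hz using 2 with n
  · rw [im_ofReal_mul_exp_mul_I_pow]
    push_cast
    ring
  · simp [exp_ofReal_mul_I_re, exp_ofReal_mul_I_im]
end

section
/- For every integer r, the quantity 4 sin(rπ/5) sin(2rπ/5) cos(rπ/4) lies in the set {0, ±√5/√2, ±√5}. -/
open Real

lemma cos_v1 : Real.cos (π / 5) = (Real.sqrt 5 + 1) / 4 := by
  rw [Real.cos_pi_div_five]; ring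

lemma cos_v2 : Real.cos (2 * π / 5) = (Real.sqrt 5 - 1) / 4 := by
  have h := Real.cos_two_mul (π / 5)
  rw [Real.cos_pi_div_five] at h
  have h2 : 2 * (π / 5) = 2 * π / 5 := by ring
  rw [h2] at h
  have h5 : Real.sqrt 5 ^ 2 = 5 := Real.sq_sqrt (by norm_num)
  nlinarith

lemma cos_v3 : Real.cos (3 * π / 5) = -((Real.sqrt 5 - 1) / 4) := by
  rw [show 3 * π / 5 = π - 2 * π / 5 by ring, Real.cos_pi_sub, cos_v2]

lemma cos_v4 : Real.cos (4 * π / 5) = -((Real.sqrt 5 + 1) / 4) := by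
  rw [show 4 * π / 5 = π - π / 5 by ring, Real.cos_pi_sub, cos_v1]

lemma lemA (r : ℤ) : 4 * Real.sin (r * π / 5) * Real.sin (2 * r * π / 5)
    ∈ ({0, Real.sqrt 5, -Real.sqrt 5} : Set ℝ) := by
  have key : 4 * Real.sin (r * π / 5) * Real.sin (2 * r * π / 5)
      = 2 * Real.cos (r * π / 5) - 2 * Real.cos (3 * r * π / 5) := by
    have h := Real.cos_sub_cos ((r : ℝ) * π / 5) (3 * r * π / 5)
    rw [show ((r : ℝ) * π / 5 + 3 * r * π / 5) / 2 = 2 * r * π / 5 by ring,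
        show ((r : ℝ) * π / 5 - 3 * r * π / 5) / 2 = -(r * π / 5) by ring,
        Real.sin_neg] at h
    linarith [h]
  obtain ⟨q, k, hk0, hk9, rfl⟩ :
      ∃ q k : ℤ, 0 ≤ k ∧ k < 10 ∧ r = 10 * q + k :=
    ⟨r / 10, r % 10, Int.emod_nonneg r (by norm_num),
      Int.emod_lt_of_pos r (by norm_num), (Int.mul_ediv_add_emod r 10).symm⟩
  rw [key,
    show ((10 * q + k : ℤ) : ℝ) * π / 5 = (k : ℝ) * π / 5 + (q : ℤ) * (2 * π) by
      push_cast; ring,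
    show 3 * ((10 * q + k : ℤ) : ℝ) * π / 5
        = 3 * (k : ℝ) * π / 5 + ((3 * q : ℤ) : ℝ) * (2 * π) by push_cast; ring,
    Real.cos_add_int_mul_two_pi, Real.cos_add_int_mul_two_pi]
  simp only [Set.mem_insert_iff, Set.mem_singleton_iff]
  interval_cases k
  · left; norm_num
  · right; left
    rw [show ((1 : ℤ) : ℝ) * π / 5 = π / 5 by push_cast; ring,
        show 3 * ((1 : ℤ) : ℝ) * π / 5 = 3 * π / 5 by push_cast; ring,
        cos_v1, cos_v3]
    ring
  · right; left
    rw [show ((2 : ℤ) : ℝ) * π / 5 = 2 * π / 5 by push_cast; ring,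
        show 3 * ((2 : ℤ) : ℝ) * π / 5 = -(4 * π / 5) + ((1 : ℤ) : ℝ) * (2 * π) by
          push_cast; ring,
        Real.cos_add_int_mul_two_pi, Real.cos_neg, cos_v2, cos_v4]
    ring
  · right; right
    rw [show ((3 : ℤ) : ℝ) * π / 5 = 3 * π / 5 by push_cast; ring,
        show 3 * ((3 : ℤ) : ℝ) * π / 5 = -(π / 5) + ((1 : ℤ) : ℝ) * (2 * π) by
          push_cast; ring,
        Real.cos_add_int_mul_two_pi, Real.cos_neg, cos_v3, cos_v1]
    ring
  · right; right
    rw [show ((4 : ℤ) : ℝ) * π / 5 = 4 * π / 5 by push_cast; ring,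
        show 3 * ((4 : ℤ) : ℝ) * π / 5 = 2 * π / 5 + ((1 : ℤ) : ℝ) * (2 * π) by
          push_cast; ring,
        Real.cos_add_int_mul_two_pi, cos_v4, cos_v2]
    ring
  · left
    rw [show ((5 : ℤ) : ℝ) * π / 5 = π by push_cast; ring,
        show 3 * ((5 : ℤ) : ℝ) * π / 5 = π + ((1 : ℤ) : ℝ) * (2 * π) by
          push_cast; ring,
        Real.cos_add_int_mul_two_pi, Real.cos_pi]
    ring
  · right; right
    rw [show ((6 : ℤ) : ℝ) * π / 5 = -(4 * π / 5) + ((1 : ℤ) : ℝ) * (2 * π) by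
          push_cast; ring,
        show 3 * ((6 : ℤ) : ℝ) * π / 5 = -(2 * π / 5) + ((2 : ℤ) : ℝ) * (2 * π) by
          push_cast; ring,
        Real.cos_add_int_mul_two_pi, Real.cos_add_int_mul_two_pi,
        Real.cos_neg, Real.cos_neg, cos_v4, cos_v2]
    ring
  · right; right
    rw [show ((7 : ℤ) : ℝ) * π / 5 = -(3 * π / 5) + ((1 : ℤ) : ℝ) * (2 * π) by
          push_cast; ring,
        show 3 * ((7 : ℤ) : ℝ) * π / 5 = π / 5 + ((2 : ℤ) : ℝ) * (2 * π) by
          push_cast; ring,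
        Real.cos_add_int_mul_two_pi, Real.cos_add_int_mul_two_pi,
        Real.cos_neg, cos_v3, cos_v1]
    ring
  · right; left
    rw [show ((8 : ℤ) : ℝ) * π / 5 = -(2 * π / 5) + ((1 : ℤ) : ℝ) * (2 * π) by
          push_cast; ring,
        show 3 * ((8 : ℤ) : ℝ) * π / 5 = 4 * π / 5 + ((2 : ℤ) : ℝ) * (2 * π) by
          push_cast; ring,
        Real.cos_add_int_mul_two_pi, Real.cos_add_int_mul_two_pi,
        Real.cos_neg, cos_v2, cos_v4]
    ring
  · right; left
    rw [show ((9 : ℤ) : ℝ) * π / 5 = -(π / 5) + ((1 : ℤ) : ℝ) * (2 * π) by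
          push_cast; ring,
        show 3 * ((9 : ℤ) : ℝ) * π / 5 = -(3 * π / 5) + ((3 : ℤ) : ℝ) * (2 * π) by
          push_cast; ring,
        Real.cos_add_int_mul_two_pi, Real.cos_add_int_mul_two_pi,
        Real.cos_neg, Real.cos_neg, cos_v1, cos_v3]
    ring

lemma lemB (r : ℤ) : Real.cos (r * π / 4)
    ∈ ({0, 1, -1, Real.sqrt 2 / 2, -(Real.sqrt 2 / 2)} : Set ℝ) := by
  obtain ⟨q, k, hk0, hk7, rfl⟩ :
      ∃ q k : ℤ, 0 ≤ k ∧ k < 8 ∧ r = 8 * q + k :=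
    ⟨r / 8, r % 8, Int.emod_nonneg r (by norm_num),
      Int.emod_lt_of_pos r (by norm_num), (Int.mul_ediv_add_emod r 8).symm⟩
  rw [show ((8 * q + k : ℤ) : ℝ) * π / 4 = (k : ℝ) * π / 4 + (q : ℤ) * (2 * π) by
      push_cast; ring,
    Real.cos_add_int_mul_two_pi]
  simp only [Set.mem_insert_iff, Set.mem_singleton_iff]
  interval_cases k
  · right; left; norm_num
  · right; right; right; left
    rw [show ((1 : ℤ) : ℝ) * π / 4 = π / 4 by push_cast; ring, Real.cos_pi_div_four]
  · left
    rw [show ((2 : ℤ) : ℝ) * π / 4 = π / 2 by push_cast; ring, Real.cos_pi_div_two]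
  · right; right; right; right
    rw [show ((3 : ℤ) : ℝ) * π / 4 = π - π / 4 by push_cast; ring, Real.cos_pi_sub,
        Real.cos_pi_div_four]
  · right; right; left
    rw [show ((4 : ℤ) : ℝ) * π / 4 = π by push_cast; ring, Real.cos_pi]
  · right; right; right; right
    rw [show ((5 : ℤ) : ℝ) * π / 4 = -(π - π / 4) + ((1 : ℤ) : ℝ) * (2 * π) by
          push_cast; ring,
        Real.cos_add_int_mul_two_pi, Real.cos_neg, Real.cos_pi_sub,
        Real.cos_pi_div_four]
  · left
    rw [show ((6 : ℤ) : ℝ) * π / 4 = -(π / 2) + ((1 : ℤ) : ℝ) * (2 * π) by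
          push_cast; ring,
        Real.cos_add_int_mul_two_pi, Real.cos_neg, Real.cos_pi_div_two]
  · right; right; right; left
    rw [show ((7 : ℤ) : ℝ) * π / 4 = -(π / 4) + ((1 : ℤ) : ℝ) * (2 * π) by
          push_cast; ring,
        Real.cos_add_int_mul_two_pi, Real.cos_neg, Real.cos_pi_div_four]

theorem f_values (r : ℤ) :
    4 * Real.sin (r * Real.pi / 5) * Real.sin (2 * r * Real.pi / 5) * Real.cos (r * Real.pi / 4)
      ∈ ({0, Real.sqrt 5 / Real.sqrt 2, -(Real.sqrt 5 / Real.sqrt 2), Real.sqrt 5,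
          -Real.sqrt 5} : Set ℝ) := by
  have hA := lemA r
  have hB := lemB r
  simp only [Set.mem_insert_iff, Set.mem_singleton_iff] at hA hB ⊢
  have h2 : Real.sqrt 2 * Real.sqrt 2 = 2 := Real.mul_self_sqrt (by norm_num)
  have h2pos : (0 : ℝ) < Real.sqrt 2 := Real.sqrt_pos.mpr (by norm_num)
  have hhalf : Real.sqrt 5 * (Real.sqrt 2 / 2) = Real.sqrt 5 / Real.sqrt 2 := by
    rw [eq_div_iff (ne_of_gt h2pos)]
    linear_combination (Real.sqrt 5 / 2) * h2
  rcases hA with hA | hA | hA <;>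
    rcases hB with hB | hB | hB | hB | hB <;>
    rw [show (4 : ℝ) * Real.sin (r * π / 5) * Real.sin (2 * r * π / 5) * Real.cos (r * π / 4)
        = (4 * Real.sin (r * π / 5) * Real.sin (2 * r * π / 5)) * Real.cos (r * π / 4)
        from by ring, hA, hB]
  · left; ring
  · left; ring
  · left; ring
  · left; ring
  · left; ring
  · left; ring
  · right; right; right; left; ring
  · right; right; right; right; ring
  · right; left; exact hhalf
  · right; right; left; rw [← hhalf]; ring
  · left; ring
  · right; right; right; right; ring
  · right; right; right; left; ring
  · right; right; left; rw [← hhalf]; ring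
  · right; left; rw [← hhalf]; ring
end

section
/- For every real t with |t| ≥ 1 (t ≠ 0), artanh(((1 - t + 2t²)/(1 - t + 3t² - 2t³ + 4t⁴)) · t√5) equals -(1/2)[log(1 - 2q cos(π/20) + q²) - log(1 - 2q cos(7π/20) + q²) + log(1 - 2q cos(9π/20) + q²) - log(1 - 2q cos(17π/20) + q²)], where q = 1/(t√2). -/
/-- The real inverse hyperbolic tangent: artanh x = (1/2) log ((1+x)/(1-x)). -/
noncomputable def Real.artanh' (x : ℝ) : ℝ := (1 / 2) * Real.log ((1 + x) / (1 - x))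

/-! Pair the four quadratics as `cos (π/4 ∓ π/5)` and `cos (3π/5 ∓ π/4)`. Each pair's product is,
by `cos (a - b) cos (a + b) = cos² a - sin² b`, an explicit quadratic in `q` and `1 + q²` over
`ℚ(√2, √5)`; with `q = 1/(t√2)` and after clearing `4 t⁴` the two products become
`P(t) ∓ N(t) t √5`, where `N / P` is the rational function in the statement. Hence, for `x` the
argument of artanh, `(1 + x) / (1 - x)` is the quotient of the two products and the logarithm
splits. All factors are positive because `1 - 2 q cos x + q² = (q - cos x)² + sin² x`. -/

open Real

lemma cos_three_pi_div_five : cos (3 * π / 5) = (1 - √5) / 4 := by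
  have h2 : cos (2 * (π / 5)) = 2 * ((1 + √5) / 4) ^ 2 - 1 := by
    rw [cos_two_mul, cos_pi_div_five]
  rw [show 3 * π / 5 = π - 2 * (π / 5) by ring, cos_pi_sub, h2]
  linear_combination (-1 / 8 : ℝ) * Real.sq_sqrt (show (0 : ℝ) ≤ 5 by norm_num)

lemma one_sub_two_mul_cos_add_sq_pos (q : ℝ) {x : ℝ} (hx : sin x ≠ 0) :
    0 < 1 - 2 * q * cos x + q ^ 2 := by
  have h : 1 - 2 * q * cos x + q ^ 2 = (q - cos x) ^ 2 + sin x ^ 2 := by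
    linear_combination -sin_sq_add_cos_sq x
  rw [h]
  positivity

lemma one_sub_two_mul_cos_sub_mul_one_sub_two_mul_cos_add (q a b : ℝ) :
    (1 - 2 * q * cos (a - b) + q ^ 2) * (1 - 2 * q * cos (a + b) + q ^ 2)
      = (1 + q ^ 2) ^ 2 - 4 * q * cos a * cos b * (1 + q ^ 2)
        + 4 * q ^ 2 * (cos a ^ 2 - sin b ^ 2) := by
  rw [cos_sub, cos_add]
  linear_combination (4 * q ^ 2 * cos a ^ 2) * sin_sq_add_cos_sq b
    - (4 * q ^ 2 * sin b ^ 2) * sin_sq_add_cos_sq a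

lemma one_sub_two_mul_cos_pi_div_twenty_mul (q : ℝ) :
    (1 - 2 * q * cos (π / 20) + q ^ 2) * (1 - 2 * q * cos (9 * π / 20) + q ^ 2)
      = (1 + q ^ 2) ^ 2 - √2 * q * (1 + √5) / 2 * (1 + q ^ 2) + q ^ 2 * (√5 - 1) / 2 := by
  have h := one_sub_two_mul_cos_sub_mul_one_sub_two_mul_cos_add q (π / 4) (π / 5)
  rw [show π / 4 - π / 5 = π / 20 by ring, show π / 4 + π / 5 = 9 * π / 20 by ring] at h
  rw [h, cos_pi_div_four, cos_pi_div_five, sin_sq, cos_pi_div_five]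
  linear_combination q ^ 2 * Real.sq_sqrt (show (0 : ℝ) ≤ 2 by norm_num)
    + (q ^ 2 / 4) * Real.sq_sqrt (show (0 : ℝ) ≤ 5 by norm_num)

lemma one_sub_two_mul_cos_seven_pi_div_twenty_mul (q : ℝ) :
    (1 - 2 * q * cos (7 * π / 20) + q ^ 2) * (1 - 2 * q * cos (17 * π / 20) + q ^ 2)
      = (1 + q ^ 2) ^ 2 + √2 * q * (√5 - 1) / 2 * (1 + q ^ 2) - q ^ 2 * (1 + √5) / 2 := by
  have h := one_sub_two_mul_cos_sub_mul_one_sub_two_mul_cos_add q (3 * π / 5) (π / 4)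
  rw [show 3 * π / 5 - π / 4 = 7 * π / 20 by ring,
    show 3 * π / 5 + π / 4 = 17 * π / 20 by ring] at h
  rw [h, cos_three_pi_div_five, cos_pi_div_four, sin_pi_div_four]
  linear_combination (-q ^ 2) * Real.sq_sqrt (show (0 : ℝ) ≤ 2 by norm_num)
    + (q ^ 2 / 4) * Real.sq_sqrt (show (0 : ℝ) ≤ 5 by norm_num)

lemma Real.artanh'_div {a b : ℝ} (hsub : 0 < b - a) (hadd : 0 < b + a) :
    Real.artanh' (a / b) = 1 / 2 * (log (b + a) - log (b - a)) := by
  have hb : b ≠ 0 := by intro h; subst h; linarith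
  have h : (1 + a / b) / (1 - a / b) = (b + a) / (b - a) := by
    field_simp
  rw [Real.artanh', h, log_div hadd.ne' hsub.ne']

theorem artanh_eq_log_combination_general (t : ℝ) :
    Real.artanh' (((1 - t + 2 * t ^ 2) / (1 - t + 3 * t ^ 2 - 2 * t ^ 3 + 4 * t ^ 4)) *
        (t * Real.sqrt 5))
      = -(1 / 2) *
          (Real.log (1 - 2 * (1 / (t * Real.sqrt 2)) * Real.cos (Real.pi / 20) +
              (1 / (t * Real.sqrt 2)) ^ 2)
           - Real.log (1 - 2 * (1 / (t * Real.sqrt 2)) * Real.cos (7 * Real.pi / 20) +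
              (1 / (t * Real.sqrt 2)) ^ 2)
           + Real.log (1 - 2 * (1 / (t * Real.sqrt 2)) * Real.cos (9 * Real.pi / 20) +
              (1 / (t * Real.sqrt 2)) ^ 2)
           - Real.log (1 - 2 * (1 / (t * Real.sqrt 2)) * Real.cos (17 * Real.pi / 20) +
              (1 / (t * Real.sqrt 2)) ^ 2)) := by
  rcases eq_or_ne t 0 with rfl | ht
  · -- `1 / (0 * √2) = 0`, so every logarithm is `log 1`
    simp [Real.artanh']
  set q := 1 / (t * √2) with hq
  have hq2 : q ^ 2 = 1 / (2 * t ^ 2) := by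
    rw [hq, div_pow, mul_pow, sq_sqrt zero_le_two]
    ring
  have hqs : √2 * q = 1 / t := by
    rw [hq]
    field_simp
  have hsub : 1 - t + 3 * t ^ 2 - 2 * t ^ 3 + 4 * t ^ 4 - (1 - t + 2 * t ^ 2) * (t * √5)
      = 4 * t ^ 4 * ((1 - 2 * q * cos (π / 20) + q ^ 2)
        * (1 - 2 * q * cos (9 * π / 20) + q ^ 2)) := by
    rw [one_sub_two_mul_cos_pi_div_twenty_mul, hqs, hq2]
    field_simp
    ring
  have hadd : 1 - t + 3 * t ^ 2 - 2 * t ^ 3 + 4 * t ^ 4 + (1 - t + 2 * t ^ 2) * (t * √5)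
      = 4 * t ^ 4 * ((1 - 2 * q * cos (7 * π / 20) + q ^ 2)
        * (1 - 2 * q * cos (17 * π / 20) + q ^ 2)) := by
    rw [one_sub_two_mul_cos_seven_pi_div_twenty_mul, hqs, hq2]
    field_simp
    ring
  have hpos (k : ℝ) (hk0 : 0 < k) (hk : k < 20) : 0 < 1 - 2 * q * cos (k * π / 20) + q ^ 2 :=
    one_sub_two_mul_cos_add_sq_pos q
      (sin_pos_of_pos_of_lt_pi (by positivity) (by nlinarith [pi_pos])).ne'
  have h1 : 0 < 1 - 2 * q * cos (π / 20) + q ^ 2 := by simpa using hpos 1 one_pos (by norm_num)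
  have h7 := hpos 7 (by norm_num) (by norm_num)
  have h9 := hpos 9 (by norm_num) (by norm_num)
  have h17 := hpos 17 (by norm_num) (by norm_num)
  have h4 : (0 : ℝ) < 4 * t ^ 4 := by positivity
  rw [div_mul_eq_mul_div, Real.artanh'_div (hsub ▸ by positivity) (hadd ▸ by positivity),
    hsub, hadd, log_mul h4.ne' (by positivity), log_mul h4.ne' (by positivity),
    log_mul h1.ne' h9.ne', log_mul h7.ne' h17.ne']
  ring

theorem artanh_eq_log_combination (t : ℝ) (ht : 1 ≤ |t|) :
    Real.artanh' (((1 - t + 2 * t ^ 2) / (1 - t + 3 * t ^ 2 - 2 * t ^ 3 + 4 * t ^ 4)) *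
        (t * Real.sqrt 5))
      = -(1 / 2) *
          (Real.log (1 - 2 * (1 / (t * Real.sqrt 2)) * Real.cos (Real.pi / 20) +
              (1 / (t * Real.sqrt 2)) ^ 2)
           - Real.log (1 - 2 * (1 / (t * Real.sqrt 2)) * Real.cos (7 * Real.pi / 20) +
              (1 / (t * Real.sqrt 2)) ^ 2)
           + Real.log (1 - 2 * (1 / (t * Real.sqrt 2)) * Real.cos (9 * Real.pi / 20) +
              (1 / (t * Real.sqrt 2)) ^ 2)
           - Real.log (1 - 2 * (1 / (t * Real.sqrt 2)) * Real.cos (17 * Real.pi / 20) +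
              (1 / (t * Real.sqrt 2)) ^ 2)) :=
  artanh_eq_log_combination_general t
end

section
/- For every real t with |t| ≥ 1, artanh(((1 - t + 2t²)/(1 - t + 3t² - 2t³ + 4t⁴)) · t√5) = ∑_{r=1}^∞ (1/(r · (t√2)^r)) · 4 sin(rπ/5) sin(2rπ/5) cos(rπ/4). -/
open Real

private lemma aux_key {q : ℝ} (hq : |q| < 1) (θ : ℝ) :
    HasSum (fun n : ℕ => q ^ n * Real.cos (n * θ) / n)
      (-Real.log (1 - 2 * q * Real.cos θ + q ^ 2) / 2) := by
  set z : ℂ := (q : ℂ) * Complex.exp (θ * Complex.I) with hzdef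
  have hz : ‖z‖ < 1 := by
    simp only [hzdef, norm_mul, Real.norm_eq_abs, Complex.norm_real,
      Complex.norm_exp_ofReal_mul_I, mul_one]
    exact hq
  have H := Complex.hasSum_re (Complex.hasSum_taylorSeries_neg_log hz)
  have hterm : ∀ n : ℕ, (z ^ n / (n : ℂ)).re = q ^ n * Real.cos (n * θ) / n := by
    intro n
    have hzn : z ^ n = ((q ^ n * Real.cos (n * θ) : ℝ) : ℂ) +
        ((q ^ n * Real.sin (n * θ) : ℝ) : ℂ) * Complex.I := by
      rw [hzdef, mul_pow, ← Complex.exp_nat_mul,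
        show (n : ℂ) * ((θ : ℂ) * Complex.I) = (((n : ℝ) * θ : ℝ) : ℂ) * Complex.I by
          push_cast; ring,
        Complex.exp_mul_I]
      push_cast
      ring
    rw [hzn]
    rcases Nat.eq_zero_or_pos n with rfl | hn
    · simp
    have hn' : ((n : ℝ)) ≠ 0 := by positivity
    rw [show ((n : ℂ)) = (((n : ℝ)) : ℂ) by push_cast; ring]
    rw [Complex.div_ofReal_re]
    simp [← Complex.ofReal_natCast, ← Complex.ofReal_mul, Complex.cos_ofReal_re,
      Complex.sin_ofReal_re, Complex.sin_ofReal_im, ← Complex.ofReal_pow]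
  have hval : (-Complex.log (1 - z)).re = -Real.log (1 - 2 * q * Real.cos θ + q ^ 2) / 2 := by
    rw [Complex.neg_re, Complex.log_re]
    have habs : ‖1 - z‖ = Real.sqrt (1 - 2 * q * Real.cos θ + q ^ 2) := by
      rw [Complex.norm_def]
      congr 1
      rw [hzdef, Complex.exp_mul_I]
      simp [Complex.normSq_apply, Complex.cos_ofReal_re, Complex.sin_ofReal_re]
      nlinarith [Real.sin_sq_add_cos_sq θ]
    have hge : (0:ℝ) ≤ 1 - 2 * q * Real.cos θ + q ^ 2 := by
      nlinarith [sq_nonneg (1 - q * Real.cos θ), sq_nonneg (q * Real.sin θ),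
        Real.sin_sq_add_cos_sq θ]
    rw [habs, Real.log_sqrt hge]
    ring
  rw [← hval]
  convert H using 1
  funext n
  exact (hterm n).symm

private lemma aux_trig (x : ℝ) : 4 * Real.sin (4*x) * Real.sin (8*x) * Real.cos (5*x) =
    Real.cos x + Real.cos (9*x) - Real.cos (7*x) - Real.cos (17*x) := by
  have ha := Real.cos_sub (5*x) (4*x)
  rw [show 5*x - 4*x = x by ring] at ha
  have hb := Real.cos_add (5*x) (4*x)
  rw [show 5*x + 4*x = 9*x by ring] at hb
  have hc := Real.cos_sub (12*x) (5*x)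
  rw [show 12*x - 5*x = 7*x by ring] at hc
  have hd := Real.cos_add (12*x) (5*x)
  rw [show 12*x + 5*x = 17*x by ring] at hd
  have he := Real.cos_sub (8*x) (4*x)
  rw [show 8*x - 4*x = 4*x by ring] at he
  have hf := Real.cos_add (8*x) (4*x)
  rw [show 8*x + 4*x = 12*x by ring] at hf
  linear_combination -(ha + hb - hc - hd) - 2 * Real.cos (5*x) * (he - hf)

private lemma aux_cos_two_pi_div_five : Real.cos (2*π/5) = (Real.sqrt 5 - 1)/4 := by
  have h := Real.cos_two_mul (π/5)
  rw [show 2*(π/5) = 2*π/5 by ring, Real.cos_pi_div_five] at h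
  have h5 : Real.sqrt 5 ^ 2 = 5 := Real.sq_sqrt (by norm_num)
  rw [h]; nlinarith [h5]

private lemma aux_c19sum :
    Real.cos (π/20) + Real.cos (9*π/20) = Real.sqrt 2 * (1 + Real.sqrt 5)/4 := by
  have ha := Real.cos_sub (π/4) (π/5)
  rw [show π/4 - π/5 = π/20 by ring] at ha
  have hb := Real.cos_add (π/4) (π/5)
  rw [show π/4 + π/5 = 9*π/20 by ring] at hb
  rw [ha, hb, Real.cos_pi_div_four, Real.cos_pi_div_five]
  ring

private lemma aux_c19prod : Real.cos (π/20) * Real.cos (9*π/20) = (Real.sqrt 5 - 1)/8 := by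
  have ha := Real.cos_sub (9*π/20) (π/20)
  rw [show 9*π/20 - π/20 = 2*π/5 by ring] at ha
  have hb := Real.cos_add (9*π/20) (π/20)
  rw [show 9*π/20 + π/20 = π/2 by ring, Real.cos_pi_div_two] at hb
  rw [aux_cos_two_pi_div_five] at ha
  linear_combination -(ha + hb)/2

private lemma aux_c717sum :
    Real.cos (7*π/20) + Real.cos (17*π/20) = -(Real.sqrt 2 * (Real.sqrt 5 - 1)/4) := by
  have ha := Real.cos_sub (3*π/5) (π/4)
  rw [show 3*π/5 - π/4 = 7*π/20 by ring] at ha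
  have hb := Real.cos_add (3*π/5) (π/4)
  rw [show 3*π/5 + π/4 = 17*π/20 by ring] at hb
  have h35 : Real.cos (3*π/5) = -((Real.sqrt 5 - 1)/4) := by
    have := Real.cos_pi_sub (2*π/5)
    rw [show π - 2*π/5 = 3*π/5 by ring, aux_cos_two_pi_div_five] at this
    exact this
  rw [ha, hb, h35, Real.cos_pi_div_four]
  ring

private lemma aux_c717prod :
    Real.cos (7*π/20) * Real.cos (17*π/20) = -((1 + Real.sqrt 5)/8) := by
  have ha := Real.cos_sub (17*π/20) (7*π/20)
  rw [show 17*π/20 - 7*π/20 = π/2 by ring, Real.cos_pi_div_two] at ha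
  have hb := Real.cos_add (17*π/20) (7*π/20)
  rw [show 17*π/20 + 7*π/20 = π/5 + π by ring, Real.cos_add_pi, Real.cos_pi_div_five] at hb
  linear_combination -(ha + hb)/2

theorem artanh_eq_series (t : ℝ) (ht : 1 ≤ |t|) :
    HasSum
      (fun r : ℕ =>
        (1 / ((r + 1) * (t * Real.sqrt 2) ^ (r + 1))) *
          (4 * Real.sin ((r + 1) * Real.pi / 5) * Real.sin (2 * (r + 1) * Real.pi / 5) *
            Real.cos ((r + 1) * Real.pi / 4)))
      (Real.artanh' (((1 - t + 2 * t ^ 2) / (1 - t + 3 * t ^ 2 - 2 * t ^ 3 + 4 * t ^ 4)) *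
        (t * Real.sqrt 5))) := by
  have ht0 : t ≠ 0 := by
    intro h; rw [h] at ht; norm_num at ht
  have hs2 : Real.sqrt 2 ^ 2 = 2 := Real.sq_sqrt (by norm_num)
  have hs2pos : 0 < Real.sqrt 2 := Real.sqrt_pos.2 (by norm_num)
  have hs2gt1 : 1 < Real.sqrt 2 := by nlinarith
  set s5 : ℝ := Real.sqrt 5 with hs5def
  set q : ℝ := (t * Real.sqrt 2)⁻¹ with hqdef
  have hts2 : t * Real.sqrt 2 ≠ 0 := mul_ne_zero ht0 (ne_of_gt hs2pos)
  have hq : |q| < 1 := by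
    rw [hqdef, abs_inv, abs_mul, abs_of_pos hs2pos]
    have h1 : 1 < |t| * Real.sqrt 2 := by nlinarith
    exact inv_lt_one_of_one_lt₀ h1
  have hqs2 : q * Real.sqrt 2 = t⁻¹ := by
    rw [hqdef]; field_simp
  have hq2 : q ^ 2 = (2 * t ^ 2)⁻¹ := by
    rw [hqdef, inv_pow, mul_pow, hs2, mul_comm]
  have hdpos : ∀ θ : ℝ, 0 < 1 - 2 * q * Real.cos θ + q ^ 2 := by
    intro θ
    have h1 := Real.neg_one_le_cos θ
    have h2 := Real.cos_le_one θ
    obtain ⟨h3a, h3b⟩ := abs_lt.mp hq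
    rcases le_or_gt 0 q with hq0 | hq0
    · have hs := mul_pos (sub_pos.2 h3b) (sub_pos.2 h3b)
      have hp := mul_nonneg hq0 (sub_nonneg.2 h2)
      nlinarith
    · have hs := mul_pos (by linarith : (0:ℝ) < 1 + q) (by linarith : (0:ℝ) < 1 + q)
      have hp := mul_nonpos_of_nonpos_of_nonneg hq0.le (by linarith : (0:ℝ) ≤ 1 + Real.cos θ)
      nlinarith
  -- the four log series
  have H1 := aux_key hq (π/20)
  have H9 := aux_key hq (9*π/20)
  have H7 := aux_key hq (7*π/20)
  have H17 := aux_key hq (17*π/20)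
  have C := (H1.add H9).sub (H7.add H17)
  -- abbreviations
  set V : ℝ := 1 - t + 3 * t ^ 2 - 2 * t ^ 3 + 4 * t ^ 4 with hVdef
  set N : ℝ := 1 - t + 2 * t ^ 2 with hNdef
  set A : ℝ := (1 + (2*t^2)⁻¹)^2 + (1 + (2*t^2)⁻¹)*(s5-1)/(2*t) - (2*t^2)⁻¹*(1+s5)/2
    with hAdef
  set B : ℝ := (1 + (2*t^2)⁻¹)^2 - (1 + (2*t^2)⁻¹)*(1+s5)/(2*t) + (2*t^2)⁻¹*(s5-1)/2
    with hBdef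
  have hA : (1 - 2*q*Real.cos (7*π/20) + q^2) * (1 - 2*q*Real.cos (17*π/20) + q^2) = A := by
    rw [hAdef, ← hq2]
    linear_combination (-(2*q*(1+q^2))) * aux_c717sum + (4*q^2) * aux_c717prod
      + ((1+q^2)*(s5-1)/2) * hqs2
  have hB : (1 - 2*q*Real.cos (π/20) + q^2) * (1 - 2*q*Real.cos (9*π/20) + q^2) = B := by
    rw [hBdef, ← hq2]
    linear_combination (-(2*q*(1+q^2))) * aux_c19sum + (4*q^2) * aux_c19prod
      + (-(1+q^2)*(1+s5)/2) * hqs2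
  have hApos : 0 < A := hA ▸ mul_pos (hdpos _) (hdpos _)
  have hBpos : 0 < B := hB ▸ mul_pos (hdpos _) (hdpos _)
  have hPA : 4 * t ^ 4 * A = V + s5 * t * N := by
    rw [hAdef, hVdef, hNdef]; field_simp; ring
  have hQB : 4 * t ^ 4 * B = V - s5 * t * N := by
    rw [hBdef, hVdef, hNdef]; field_simp; ring
  have ht4 : (0:ℝ) < 4 * t ^ 4 := by positivity
  have hPpos : 0 < V + s5 * t * N := by rw [← hPA]; exact mul_pos ht4 hApos
  have hQpos : 0 < V - s5 * t * N := by rw [← hQB]; exact mul_pos ht4 hBpos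
  have hVpos : 0 < V := by linarith
  have hVne : V ≠ 0 := ne_of_gt hVpos
  set x : ℝ := (N / V) * (t * s5) with hxdef
  have h1x : 1 - x = (V - s5 * t * N) / V := by
    rw [hxdef]; field_simp
  have h1x' : 1 + x = (V + s5 * t * N) / V := by
    rw [hxdef]; field_simp
  have h1xpos : 0 < 1 - x := by rw [h1x]; positivity
  have hratio : (1 + x) / (1 - x) = A / B := by
    rw [h1x, h1x', div_div_div_cancel_right₀ hVne, ← hPA, ← hQB,
      mul_div_mul_left _ _ (ne_of_gt ht4)]
  have hval : Real.artanh' x =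
      (-Real.log (1 - 2*q*Real.cos (π/20) + q^2) / 2 +
        -Real.log (1 - 2*q*Real.cos (9*π/20) + q^2) / 2) -
      (-Real.log (1 - 2*q*Real.cos (7*π/20) + q^2) / 2 +
        -Real.log (1 - 2*q*Real.cos (17*π/20) + q^2) / 2) := by
    have e1 : Real.log (1 - 2*q*Real.cos (π/20) + q^2) +
        Real.log (1 - 2*q*Real.cos (9*π/20) + q^2) = Real.log B := by
      rw [← hB, Real.log_mul (ne_of_gt (hdpos _)) (ne_of_gt (hdpos _))]
    have e2 : Real.log (1 - 2*q*Real.cos (7*π/20) + q^2) +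
        Real.log (1 - 2*q*Real.cos (17*π/20) + q^2) = Real.log A := by
      rw [← hA, Real.log_mul (ne_of_gt (hdpos _)) (ne_of_gt (hdpos _))]
    have : Real.artanh' x = (Real.log A - Real.log B) / 2 := by
      rw [Real.artanh', hratio, Real.log_div (ne_of_gt hApos) (ne_of_gt hBpos)]
      ring
    rw [this]
    linear_combination e1/2 - e2/2
  rw [show Real.artanh' (((1 - t + 2 * t ^ 2) / (1 - t + 3 * t ^ 2 - 2 * t ^ 3 + 4 * t ^ 4)) *
        (t * Real.sqrt 5)) = Real.artanh' x by rw [hxdef, hVdef, hNdef, hs5def], hval]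
  have Cshift := (hasSum_nat_add_iff' 1).mpr C
  rw [Finset.range_one, Finset.sum_singleton] at Cshift
  simp only [Nat.cast_zero, pow_zero, one_mul, div_zero, add_zero, sub_zero, zero_add,
    zero_sub, neg_zero, sub_self] at Cshift
  convert Cshift using 1
  · rfl
  funext r
  have hX := aux_trig ((↑r + 1) * (π/20))
  rw [show (4:ℝ) * ((↑r + 1) * (π/20)) = (↑r + 1) * π / 5 by ring,
    show (8:ℝ) * ((↑r + 1) * (π/20)) = 2 * (↑r + 1) * π / 5 by ring,
    show (5:ℝ) * ((↑r + 1) * (π/20)) = (↑r + 1) * π / 4 by ring,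
    show (9:ℝ) * ((↑r + 1) * (π/20)) = (↑r + 1) * (9*π/20) by ring,
    show (7:ℝ) * ((↑r + 1) * (π/20)) = (↑r + 1) * (7*π/20) by ring,
    show (17:ℝ) * ((↑r + 1) * (π/20)) = (↑r + 1) * (17*π/20) by ring] at hX
  push_cast
  have hqq : q ^ (r+1) = ((t * Real.sqrt 2) ^ (r+1))⁻¹ := by rw [hqdef, inv_pow]
  rw [hqq, hX]
  have hne : ((r:ℝ) + 1) ≠ 0 := by positivity
  have hpne : (t * Real.sqrt 2) ^ (r + 1) ≠ 0 := pow_ne_zero _ hts2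
  field_simp
  ring
end
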